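/- Let z be an existential literal of Φ = Q₁x₁…Qₙxₙ F that is redundant, i.e., [{z̄}]_F ⊆ C_Φ(z), and suppose every literal in S_Φ(z) other than possibly z is existential with the variables of S_Φ(z) pairwise distinct. If the formula ρ_z(Φ) obtained by deleting the clauses C_Φ(z) from F (keeping the prefix on the remaining variables) is true, then Φ is true. -/

import Mathlib

/-!
A winning strategy for `ρ_z(Φ)` is changed only in the existential choices for the variables
of `S = S_Φ(z)`, each of which is set to the polarity of its literal in `S`. This satisfies
every deleted clause `[S]_F`; a kept clause mentions no variable of `S` at all (a literal `ū`
with `u ∈ S` would put it into `[S]_F` by the fixed-point property), so it keeps its value.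
-/

/-- A quantifier. -/
inductive Quant | all | ex
deriving DecidableEq

/-- A literal: a variable together with a polarity. -/
abbrev Lit (V : Type*) := V × Bool

/-- A clause: a finite set of literals. -/
abbrev Clause (V : Type*) := Finset (Lit V)

/-- The assignment `v` satisfies the clause `C`. -/
def satClause {V : Type*} (v : V → Bool) (C : Clause V) : Prop :=
  ∃ l ∈ C, v l.1 = l.2

/-- The assignment `v` satisfies the CNF matrix `F`. -/
def satCNF {V : Type*} (v : V → Bool) (F : Finset (Clause V)) : Prop :=
  ∀ C ∈ F, satClause v C

/-- Truth of the prenex QBF with prefix `p` and CNF matrix `F`, relative to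
an ambient assignment `v` (irrelevant for closed formulas). -/
def qbfTrue {V : Type*} [DecidableEq V] :
    List (Quant × V) → (V → Bool) → Finset (Clause V) → Prop
  | [], v, F => satCNF v F
  | (Quant.all, x) :: p, v, F => ∀ b, qbfTrue p (Function.update v x b) F
  | (Quant.ex, x) :: p, v, F => ∃ b, qbfTrue p (Function.update v x b) F

/-- Negation of a literal. -/
def Lit.neg {V : Type*} (l : Lit V) : Lit V := (l.1, !l.2)

/-- `[S]_F`: the set of clauses of `F` containing at least one literal of `S`. -/
def bracket {V : Type*} (F : Finset (Clause V)) (S : Set (Lit V)) : Set (Clause V) :=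
  {C | C ∈ F ∧ ∃ l ∈ S, l ∈ C}

namespace QBF

variable {V : Type*}

open Function

open scoped Classical in
noncomputable def forceLits (S : Set (Lit V)) (x : V) (c : Bool) : Bool :=
  if (x, true) ∈ S then true else if (x, false) ∈ S then false else c

section forceLits

variable {S : Set (Lit V)}

theorem forceLits_of_mem (hdist : ∀ u ∈ S, ∀ w ∈ S, u.1 = w.1 → u = w) {u : Lit V}
    (hu : u ∈ S) (c : Bool) : forceLits S u.1 c = u.2 := by
  obtain ⟨x, _ | _⟩ := u
  · have hxt : (x, true) ∉ S := fun h => by simpa using hdist _ h _ hu rfl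
    simp [forceLits, hxt, hu]
  · simp [forceLits, hu]

theorem forceLits_of_forall_notMem {x : V} (hx : ∀ b, (x, b) ∉ S) (c : Bool) :
    forceLits S x c = c := by
  simp [forceLits, hx]

theorem notMem_of_mem_clause_of_notMem_bracket {F : Finset (Clause V)}
    (hneg : ∀ u ∈ S, bracket F {Lit.neg u} ⊆ bracket F S) {C : Clause V} (hC : C ∈ F)
    (hCS : C ∉ bracket F S) {l : Lit V} (hl : l ∈ C) (b : Bool) : (l.1, b) ∉ S := by
  intro hb
  rcases Bool.eq_or_eq_not b l.2 with rfl | rfl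
  · exact hCS ⟨hC, l, hb, hl⟩
  · exact hCS (hneg _ hb ⟨hC, l, by simp [Lit.neg], hl⟩)

open scoped Classical in
theorem satCNF_forceLits {F : Finset (Clause V)} (hdist : ∀ u ∈ S, ∀ w ∈ S, u.1 = w.1 → u = w)
    (hneg : ∀ u ∈ S, bracket F {Lit.neg u} ⊆ bracket F S) {w : V → Bool}
    (hw : satCNF w (F.filter fun C => ¬ ∃ l ∈ S, l ∈ C)) :
    satCNF (fun y => forceLits S y (w y)) F := by
  intro C hC
  by_cases hCS : ∃ l ∈ S, l ∈ C
  · obtain ⟨u, huS, huC⟩ := hCS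
    exact ⟨u, huC, forceLits_of_mem hdist huS _⟩
  · obtain ⟨l, hlC, hlw⟩ := hw C (Finset.mem_filter.2 ⟨hC, hCS⟩)
    have hfree := notMem_of_mem_clause_of_notMem_bracket hneg hC (fun h => hCS h.2) hlC
    exact ⟨l, hlC, (forceLits_of_forall_notMem hfree _).trans hlw⟩

end forceLits

section qbfTrue

variable [DecidableEq V] {F : Finset (Clause V)}

theorem qbfTrue_congr {q : List (Quant × V)} {w w' : V → Bool}
    (h : ∀ x, x ∉ q.map Prod.snd → w x = w' x) : qbfTrue q w F ↔ qbfTrue q w' F := by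
  induction q generalizing w w' with
  | nil =>
    have hlit : ∀ l : Lit V, w l.1 = l.2 ↔ w' l.1 = l.2 := fun l => by
      rw [h l.1 List.not_mem_nil]
    simp only [qbfTrue, satCNF, satClause, hlit]
  | cons hd q ih =>
    obtain ⟨Q, x⟩ := hd
    have hupd : ∀ b, qbfTrue q (update w x b) F ↔ qbfTrue q (update w' x b) F := by
      refine fun b => ih fun y hy => ?_
      rcases eq_or_ne y x with rfl | hne
      · simp
      · simp only [update_of_ne hne]
        exact h y (by simp [hy, hne])
    cases Q with
    | all => exact forall_congr' hupd
    | ex => exact exists_congr hupd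

/-- A pointwise recoloring `f` that fixes the universal variables carries models of `G` to
models of `F`: the existential player answers `f x b` wherever he used to answer `b`. -/
theorem qbfTrue_recolor (f : V → Bool → Bool) {q : List (Quant × V)} {G : Finset (Clause V)}
    (hall : ∀ x, (Quant.all, x) ∈ q → f x = id)
    (hmatrix : ∀ w, satCNF w G → satCNF (fun y => f y (w y)) F) {w : V → Bool}
    (hw : qbfTrue q w G) : qbfTrue q (fun y => f y (w y)) F := by
  induction q generalizing w with
  | nil => exact hmatrix w hw
  | cons hd q ih =>
    obtain ⟨Q, x⟩ := hd
    have hall' : ∀ x, (Quant.all, x) ∈ q → f x = id := fun y hy =>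
      hall y (List.mem_cons_of_mem _ hy)
    have hcomm : ∀ b, (fun y => f y (update w x b y)) = update (fun y => f y (w y)) x (f x b) :=
      fun b => funext (apply_update f w x b)
    cases Q with
    | all =>
      intro b
      have hx : f x b = b := by rw [hall x List.mem_cons_self, id]
      simpa only [hcomm, hx] using ih hall' (hw b)
    | ex =>
      obtain ⟨b, hb⟩ := hw
      exact ⟨f x b, by simpa only [hcomm] using ih hall' hb⟩

end qbfTrue

end QBF

open QBF

open scoped Classical in
theorem redundant_elim_sound_general {V : Type*} [DecidableEq V]
    (p : List (Quant × V)) (F : Finset (Clause V)) (S : Set (Lit V))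
    -- the prefix quantifies each variable at most once:
    (hnodup : (p.map Prod.snd).Nodup)
    -- every literal of `S` is existential:
    (hex : ∀ u ∈ S, (Quant.ex, u.1) ∈ p)
    -- the variables of `S` are pairwise distinct:
    (hdist : ∀ u ∈ S, ∀ w ∈ S, u.1 = w.1 → u = w)
    -- fixed-point property of `S = S_Φ(z)`: `[{ū}]_F ⊆ C_Φ(z)` for every `u ∈ S`:
    (hneg : ∀ u ∈ S, bracket F {Lit.neg u} ⊆ bracket F S)
    (v : V → Bool)
    -- `ρ_z(Φ)` is true:
    (hρ : qbfTrue p v (F.filter (fun C => ¬ ∃ l ∈ S, l ∈ C))) :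
    qbfTrue p v F := by
  have hall : ∀ x, (Quant.all, x) ∈ p → forceLits S x = id := by
    refine fun x hx => funext (forceLits_of_forall_notMem fun b hb => ?_)
    have hsame := List.inj_on_of_nodup_map hnodup (hex _ hb) hx rfl
    exact Quant.noConfusion (congrArg Prod.fst hsame)
  have hforced : qbfTrue p (fun y => forceLits S y (v y)) F :=
    qbfTrue_recolor _ hall (fun _ => satCNF_forceLits hdist hneg) hρ
  refine (qbfTrue_congr fun x hx => ?_).1 hforced
  refine forceLits_of_forall_notMem (fun b hb => hx ?_) _
  exact List.mem_map.2 ⟨_, hex _ hb, rfl⟩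

open scoped Classical in
/-- If `z` is a redundant existential literal (so `[{z̄}]_F ⊆ C_Φ(z) = [S]_F` where
`S = S_Φ(z)`), all literals of `S` are existential with pairwise distinct variables,
every clause containing the negation of a literal of `S` lies in `C_Φ(z)`
(the fixed-point property of `S_Φ(z)`), and the formula `ρ_z(Φ)` obtained by deleting
the clauses `C_Φ(z)` is true, then `Φ` is true. -/
theorem redundant_elim_sound {V : Type*} [DecidableEq V]
    (p : List (Quant × V)) (F : Finset (Clause V)) (z : Lit V) (S : Set (Lit V))
    -- the prefix quantifies each variable at most once:
    (hnodup : (p.map Prod.snd).Nodup)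
    -- the formula is closed:
    (hclosed : ∀ C ∈ F, ∀ l ∈ C, l.1 ∈ p.map Prod.snd)
    (hzS : z ∈ S)
    -- every literal of `S` is existential:
    (hex : ∀ u ∈ S, (Quant.ex, u.1) ∈ p)
    -- the variables of `S` are pairwise distinct:
    (hdist : ∀ u ∈ S, ∀ w ∈ S, u.1 = w.1 → u = w)
    -- `z` is redundant: `[{z̄}]_F ⊆ C_Φ(z)`:
    (hred : bracket F {Lit.neg z} ⊆ bracket F S)
    -- fixed-point property of `S = S_Φ(z)`: `[{ū}]_F ⊆ C_Φ(z)` for every `u ∈ S`: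
    (hneg : ∀ u ∈ S, bracket F {Lit.neg u} ⊆ bracket F S)
    (v : V → Bool)
    -- `ρ_z(Φ)` is true:
    (hρ : qbfTrue p v (F.filter (fun C => ¬ ∃ l ∈ S, l ∈ C))) :
    qbfTrue p v F :=
  redundant_elim_sound_general p F S hnodup hex hdist hneg v hρ
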